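/- arXiv:2302.02936 — 5 statements merged into one kernel-verified Lean document; each statement's English description precedes it below -/
import Mathlib

section
/- If A₁ is (ε₁, δ₁)-DP and A₂ is (ε₂, δ₂)-DP (with A₂ possibly depending on the output of A₁), then the sequential composition D ↦ (A₁(D), A₂(D, A₁(D))) is (ε₁ + ε₂, δ₁ + δ₂)-differentially private. -/
open MeasureTheory ProbabilityTheory
open scoped ENNReal

private lemma min_one_add_le {a d : ℝ≥0∞} : min 1 (a + d) ≤ min 1 a + d := by
  rcases le_total a 1 with h | h
  · rw [min_eq_right h]
    exact le_trans (min_le_right _ _) le_rfl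
  · rw [min_eq_left h]
    exact le_trans (min_le_left _ _) le_self_add

/-- DP inequality on sets extends to `[0,1]`-valued measurable functions (layer cake). -/
private lemma dp_lintegral_le {Θ : Type*} [MeasurableSpace Θ]
    (μ μ' : Measure Θ) (ε : ℝ) (δ : ℝ≥0∞)
    (hdp : ∀ S : Set Θ, MeasurableSet S → μ S ≤ ENNReal.ofReal (Real.exp ε) * μ' S + δ)
    (f : Θ → ℝ≥0∞) (hf : Measurable f) (hf1 : ∀ θ, f θ ≤ 1) :
    ∫⁻ θ, f θ ∂μ ≤ ENNReal.ofReal (Real.exp ε) * ∫⁻ θ, f θ ∂μ' + δ := by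
  set F : Θ → ℝ := fun θ => (f θ).toReal with hFdef
  have hFm : Measurable F := hf.ennreal_toReal
  have hFnn : ∀ θ, 0 ≤ F θ := fun θ => ENNReal.toReal_nonneg
  have hfne : ∀ θ, f θ ≠ ⊤ := fun θ => (lt_of_le_of_lt (hf1 θ) ENNReal.one_lt_top).ne
  have hF1 : ∀ θ, F θ ≤ 1 := fun θ => by
    rw [hFdef]
    calc (f θ).toReal ≤ (1 : ℝ≥0∞).toReal :=
          ENNReal.toReal_mono ENNReal.one_ne_top (hf1 θ)
      _ = 1 := by simp
  have hof : ∀ θ, ENNReal.ofReal (F θ) = f θ := fun θ => ENNReal.ofReal_toReal (hfne θ)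
  have lay : ∀ ν : Measure Θ,
      ∫⁻ θ, f θ ∂ν = ∫⁻ t in Set.Ioc (0:ℝ) 1, ν {a | t < F a} := by
    intro ν
    have h1 : ∫⁻ θ, f θ ∂ν = ∫⁻ θ, ENNReal.ofReal (F θ) ∂ν :=
      lintegral_congr fun θ => (hof θ).symm
    rw [h1, lintegral_eq_lintegral_meas_lt ν (Filter.Eventually.of_forall hFnn)
      hFm.aemeasurable]
    have hsplit : Set.Ioi (0:ℝ) = Set.Ioc 0 1 ∪ Set.Ioi 1 :=
      (Set.Ioc_union_Ioi_eq_Ioi zero_le_one).symm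
    rw [hsplit, lintegral_union measurableSet_Ioi (Set.Ioc_disjoint_Ioi le_rfl)]
    have hz : ∫⁻ t in Set.Ioi (1:ℝ), ν {a | t < F a} = 0 := by
      rw [setLIntegral_congr_fun measurableSet_Ioi
        (fun t (ht : 1 < t) => ?_), lintegral_zero]
      have : {a | t < F a} = ∅ := by
        ext a; simp only [Set.mem_setOf_eq, Set.mem_empty_iff_false, iff_false, not_lt]
        exact le_trans (hF1 a) ht.le
      rw [this]; exact measure_empty
    rw [hz, add_zero]
  have hAnti : Antitone fun t : ℝ => μ' {a | t < F a} := by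
    intro s t hst
    exact measure_mono fun a (ha : t < F a) => lt_of_le_of_lt hst ha
  calc ∫⁻ θ, f θ ∂μ = ∫⁻ t in Set.Ioc (0:ℝ) 1, μ {a | t < F a} := lay μ
    _ ≤ ∫⁻ t in Set.Ioc (0:ℝ) 1, (ENNReal.ofReal (Real.exp ε) * μ' {a | t < F a} + δ) := by
        refine lintegral_mono fun t => ?_
        exact hdp _ (hFm measurableSet_Ioi)
    _ = ENNReal.ofReal (Real.exp ε) * (∫⁻ t in Set.Ioc (0:ℝ) 1, μ' {a | t < F a})
          + δ * volume (Set.Ioc (0:ℝ) 1) := by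
        rw [lintegral_add_right _ measurable_const, setLIntegral_const,
          lintegral_const_mul _ hAnti.measurable]
    _ = ENNReal.ofReal (Real.exp ε) * (∫⁻ θ, f θ ∂μ') + δ := by
        rw [lay μ', Real.volume_Ioc]
        norm_num

/-- Adaptive sequential composition of differential privacy: if `A₁` is `(ε₁, δ₁)`-DP and
`A₂` (which may depend on the output of `A₁`) is `(ε₂, δ₂)`-DP uniformly in that output,
then the composition `D ↦ (A₁(D), A₂(D, A₁(D)))` is `(ε₁ + ε₂, δ₁ + δ₂)`-DP. -/
theorem dp_adaptive_composition {U Θ₁ Θ₂ : Type*} [MeasurableSpace Θ₁] [MeasurableSpace Θ₂]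
    (Neighbor : U → U → Prop)
    (A₁ : U → Measure Θ₁) (hA₁prob : ∀ D, IsProbabilityMeasure (A₁ D))
    (A₂ : U → Kernel Θ₁ Θ₂) (hA₂markov : ∀ D, IsMarkovKernel (A₂ D))
    (ε₁ ε₂ : ℝ) (δ₁ δ₂ : ℝ≥0∞)
    (hε₁ : 0 ≤ ε₁) (hε₂ : 0 ≤ ε₂)
    (hA₁ : ∀ D D', Neighbor D D' → ∀ S : Set Θ₁, MeasurableSet S →
      A₁ D S ≤ ENNReal.ofReal (Real.exp ε₁) * A₁ D' S + δ₁)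
    (hA₂ : ∀ θ : Θ₁, ∀ D D', Neighbor D D' → ∀ S : Set Θ₂, MeasurableSet S →
      A₂ D θ S ≤ ENNReal.ofReal (Real.exp ε₂) * A₂ D' θ S + δ₂) :
    ∀ D D', Neighbor D D' → ∀ S : Set (Θ₁ × Θ₂), MeasurableSet S →
      (A₁ D).bind (fun θ => (A₂ D θ).map (fun y => (θ, y))) S ≤
        ENNReal.ofReal (Real.exp (ε₁ + ε₂)) *
          (A₁ D').bind (fun θ => (A₂ D' θ).map (fun y => (θ, y))) S + (δ₁ + δ₂) := by
  intro D D' hN S hS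
  haveI := hA₁prob D
  haveI := hA₁prob D'
  haveI := hA₂markov D
  haveI := hA₂markov D'
  set ee1 := ENNReal.ofReal (Real.exp ε₁) with hee1
  set ee2 := ENNReal.ofReal (Real.exp ε₂) with hee2
  have hee : ENNReal.ofReal (Real.exp (ε₁ + ε₂)) = ee1 * ee2 := by
    rw [Real.exp_add, ENNReal.ofReal_mul (Real.exp_nonneg ε₁)]
  -- bind applied to a set
  have key : ∀ (μ : Measure Θ₁) (κ : Kernel Θ₁ Θ₂) (_ : IsMarkovKernel κ),
      μ.bind (fun θ => (κ θ).map (fun y => (θ, y))) S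
        = ∫⁻ θ, κ θ (Prod.mk θ ⁻¹' S) ∂μ := by
    intro μ κ hκ
    have hmeas : Measurable fun θ => (κ θ).map (fun y => (θ, y)) := by
      apply Measure.measurable_of_measurable_coe
      intro s hs
      simp_rw [Measure.map_apply measurable_prodMk_left hs]
      exact Kernel.measurable_kernel_prodMk_left hs
    rw [Measure.bind_apply hS hmeas.aemeasurable]
    refine lintegral_congr fun θ => ?_
    exact Measure.map_apply measurable_prodMk_left hS
  have hkm : Measurable fun θ => A₂ D' θ (Prod.mk θ ⁻¹' S) :=
    Kernel.measurable_kernel_prodMk_left hS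
  set g : Θ₁ → ℝ≥0∞ := fun θ => min 1 (ee2 * A₂ D' θ (Prod.mk θ ⁻¹' S)) with hg
  have hgm : Measurable g := measurable_const.min (hkm.const_mul ee2)
  have hg1 : ∀ θ, g θ ≤ 1 := fun θ => min_le_left _ _
  have hpt : ∀ θ, A₂ D θ (Prod.mk θ ⁻¹' S) ≤ g θ + δ₂ := by
    intro θ
    have hSθ : MeasurableSet (Prod.mk θ ⁻¹' S) := measurable_prodMk_left hS
    have h1 : A₂ D θ (Prod.mk θ ⁻¹' S) ≤ ee2 * A₂ D' θ (Prod.mk θ ⁻¹' S) + δ₂ :=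
      hA₂ θ D D' hN _ hSθ
    have h2 : A₂ D θ (Prod.mk θ ⁻¹' S) ≤ 1 := prob_le_one
    calc A₂ D θ (Prod.mk θ ⁻¹' S) ≤ min 1 (ee2 * A₂ D' θ (Prod.mk θ ⁻¹' S) + δ₂) :=
          le_min h2 h1
      _ ≤ g θ + δ₂ := min_one_add_le
  calc (A₁ D).bind (fun θ => (A₂ D θ).map (fun y => (θ, y))) S
      = ∫⁻ θ, A₂ D θ (Prod.mk θ ⁻¹' S) ∂(A₁ D) := key _ _ (hA₂markov D)
    _ ≤ ∫⁻ θ, (g θ + δ₂) ∂(A₁ D) := lintegral_mono hpt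
    _ = (∫⁻ θ, g θ ∂(A₁ D)) + δ₂ := by
        rw [lintegral_add_right _ measurable_const, lintegral_const, measure_univ, mul_one]
    _ ≤ (ee1 * ∫⁻ θ, g θ ∂(A₁ D') + δ₁) + δ₂ := by
        gcongr
        exact dp_lintegral_le (A₁ D) (A₁ D') ε₁ δ₁ (fun T hT => hA₁ D D' hN T hT) g hgm hg1
    _ ≤ (ee1 * (ee2 * ∫⁻ θ, A₂ D' θ (Prod.mk θ ⁻¹' S) ∂(A₁ D')) + δ₁) + δ₂ := by
        gcongr
        calc ∫⁻ θ, g θ ∂(A₁ D') ≤ ∫⁻ θ, ee2 * A₂ D' θ (Prod.mk θ ⁻¹' S) ∂(A₁ D') :=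
              lintegral_mono fun θ => min_le_right _ _
          _ = ee2 * ∫⁻ θ, A₂ D' θ (Prod.mk θ ⁻¹' S) ∂(A₁ D') := lintegral_const_mul _ hkm
    _ = ENNReal.ofReal (Real.exp (ε₁ + ε₂)) *
          (A₁ D').bind (fun θ => (A₂ D' θ).map (fun y => (θ, y))) S + (δ₁ + δ₂) := by
        rw [hee, key _ _ (hA₂markov D'), mul_assoc, add_assoc]
end

section
/- If a mechanism M satisfies (α, ρ)-Rényi differential privacy for some α > 1, then for every δ ∈ (0,1), M satisfies (ε, δ)-differential privacy with ε = ρ + log(1/δ)/(α − 1). -/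
open MeasureTheory
open scoped ENNReal Classical

/-- Rényi divergence of order `α` between two measures:
`D_α(P‖Q) = (1/(α−1)) log ∫ (dP/dQ)^α dQ` when `P ≪ Q`, and `+∞` otherwise. -/
noncomputable def renyiDiv {Ω : Type*} [MeasurableSpace Ω] (α : ℝ) (P Q : Measure Ω) :
    EReal :=
  if P ≪ Q then ((α - 1)⁻¹ : ℝ) * ENNReal.log (∫⁻ x, P.rnDeriv Q x ^ α ∂Q) else ⊤

/-- RDP-to-DP conversion: if a mechanism `M` satisfies `(α, ρ)`-Rényi DP for some `α > 1`,
then for every `δ ∈ (0,1)` it satisfies `(ε, δ)`-DP with `ε = ρ + log(1/δ)/(α−1)`. -/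
theorem rdp_to_dp {U Ω : Type*} [MeasurableSpace Ω] (Neighbor : U → U → Prop)
    (M : U → Measure Ω) (hprob : ∀ D, IsProbabilityMeasure (M D))
    (α ρ : ℝ) (hα : 1 < α) (hρ : 0 ≤ ρ)
    (hrdp : ∀ D D', Neighbor D D' → renyiDiv α (M D) (M D') ≤ (ρ : EReal))
    (δ : ℝ) (hδ : δ ∈ Set.Ioo (0 : ℝ) 1) :
    ∀ D D', Neighbor D D' → ∀ S : Set Ω, MeasurableSet S →
      M D S ≤ ENNReal.ofReal (Real.exp (ρ + Real.log (1 / δ) / (α - 1))) * M D' S +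
        ENNReal.ofReal δ := by
  obtain ⟨hδ0, hδ1⟩ := hδ
  intro D D' hN S hS
  have hPp := hprob D
  have hQp := hprob D'
  set P := M D with hP
  set Q := M D' with hQ
  have hle := hrdp D D' hN
  have hα1 : (0 : ℝ) < α - 1 := by linarith
  -- absolute continuity
  have hac : P ≪ Q := by
    by_contra h
    rw [renyiDiv, if_neg h] at hle
    exact absurd hle (by simp)
  rw [renyiDiv, if_pos hac] at hle
  set f := P.rnDeriv Q with hf
  have hfm : Measurable f := Measure.measurable_rnDeriv P Q
  set I := ∫⁻ x, f x ^ α ∂Q with hI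
  -- from the Rényi bound: log I ≤ (α-1)ρ
  have hlog : ENNReal.log I ≤ (((α - 1) * ρ : ℝ) : EReal) := by
    have h1 : ENNReal.log I / ((α - 1 : ℝ) : EReal) ≤ (ρ : EReal) := by
      rw [div_eq_mul_inv, mul_comm, ← EReal.coe_inv]
      exact hle
    rw [EReal.div_le_iff_le_mul (by exact_mod_cast hα1) (EReal.coe_ne_top _)] at h1
    rw [EReal.coe_mul]
    exact h1
  have hIle : I ≤ ENNReal.ofReal (Real.exp ((α - 1) * ρ)) := by
    have h2 := EReal.exp_monotone hlog
    rwa [ENNReal.exp_log, EReal.exp_coe] at h2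
  -- threshold
  set ε : ℝ := ρ + Real.log (1 / δ) / (α - 1) with hε
  set t : ℝ≥0∞ := ENNReal.ofReal (Real.exp ε) with ht
  have ht0 : t ≠ 0 := by
    simp [ht, ENNReal.ofReal_eq_zero, not_le, Real.exp_pos]
  have htT : t ≠ ⊤ := ENNReal.ofReal_ne_top
  set A : Set Ω := {x | t < f x} with hA
  have hAm : MeasurableSet A := measurableSet_lt measurable_const hfm
  -- P S = ∫_S f dQ
  have hPS : P S = ∫⁻ x in S, f x ∂Q := (Measure.setLIntegral_rnDeriv hac S).symm
  -- split
  have hsplit : ∫⁻ x in S, f x ∂Q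
      = ∫⁻ x in S ∩ A, f x ∂Q + ∫⁻ x in S \ A, f x ∂Q :=
    (lintegral_inter_add_diff f S hAm).symm
  -- bound on S \ A : f ≤ t
  have hb1 : ∫⁻ x in S \ A, f x ∂Q ≤ t * Q S := by
    calc ∫⁻ x in S \ A, f x ∂Q ≤ ∫⁻ _ in S \ A, t ∂Q := by
          refine setLIntegral_mono' (hS.diff hAm) fun x hx => ?_
          simpa [hA] using hx.2
      _ = t * Q (S \ A) := setLIntegral_const _ _
      _ ≤ t * Q S := by
          exact mul_le_mul_right (measure_mono Set.diff_subset) t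
  -- bound on S ∩ A
  set c : ℝ≥0∞ := t ^ (α - 1) with hc
  have hc0 : c ≠ 0 := by
    simp only [hc, ne_eq, ENNReal.rpow_eq_zero_iff, not_or]
    constructor
    · rintro ⟨h, _⟩; exact ht0 h
    · rintro ⟨h, _⟩; exact htT h
  have hcT : c ≠ ⊤ := by
    simp only [hc, ne_eq, ENNReal.rpow_eq_top_iff, not_or]
    constructor
    · rintro ⟨h, _⟩; exact ht0 h
    · rintro ⟨h, _⟩; exact htT h
  have hkey : ∀ x ∈ A, f x * c ≤ f x ^ α := by
    intro x hx
    have hxt : t ≤ f x := le_of_lt hx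
    have h3 : c ≤ f x ^ (α - 1) := ENNReal.rpow_le_rpow hxt (le_of_lt hα1)
    calc f x * c ≤ f x * f x ^ (α - 1) := mul_le_mul_right h3 _
      _ = f x ^ (1 : ℝ) * f x ^ (α - 1) := by rw [ENNReal.rpow_one]
      _ = f x ^ (1 + (α - 1)) := (ENNReal.rpow_add_of_nonneg 1 (α - 1) zero_le_one
            (le_of_lt hα1)).symm
      _ = f x ^ α := by ring_nf
  have hb2' : (∫⁻ x in A, f x ∂Q) * c ≤ ENNReal.ofReal (Real.exp ((α - 1) * ρ)) := by
    calc (∫⁻ x in A, f x ∂Q) * c = ∫⁻ x in A, f x * c ∂Q :=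
          (lintegral_mul_const c (hfm.mono (le_refl _) le_rfl)).symm
      _ ≤ ∫⁻ x in A, f x ^ α ∂Q := by
          refine setLIntegral_mono' hAm fun x hx => hkey x hx
      _ ≤ I := setLIntegral_le_lintegral _ _
      _ ≤ _ := hIle
  have hb2 : ∫⁻ x in S ∩ A, f x ∂Q ≤ ENNReal.ofReal δ := by
    have h4 : ∫⁻ x in S ∩ A, f x ∂Q ≤ ∫⁻ x in A, f x ∂Q :=
      lintegral_mono_set Set.inter_subset_right
    have h5 : (∫⁻ x in A, f x ∂Q) ≤ ENNReal.ofReal (Real.exp ((α - 1) * ρ)) / c :=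
      (ENNReal.le_div_iff_mul_le (Or.inl hc0) (Or.inl hcT)).2 hb2'
    have hcval : c = ENNReal.ofReal (Real.exp (ε * (α - 1))) := by
      rw [hc, ht, ENNReal.ofReal_rpow_of_pos (Real.exp_pos ε), ← Real.exp_mul]
    have hdiv : ENNReal.ofReal (Real.exp ((α - 1) * ρ)) / c = ENNReal.ofReal δ := by
      rw [hcval, ← ENNReal.ofReal_div_of_pos (Real.exp_pos _), ← Real.exp_sub]
      congr 1
      have : (α - 1) * ρ - ε * (α - 1) = Real.log δ := by
        rw [hε]
        have hlog1δ : Real.log (1 / δ) = -Real.log δ := by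
          rw [one_div, Real.log_inv]
        field_simp [hlog1δ]
        rw [hlog1δ]
        ring
      rw [this, Real.exp_log hδ0]
    calc ∫⁻ x in S ∩ A, f x ∂Q ≤ ∫⁻ x in A, f x ∂Q := h4
      _ ≤ ENNReal.ofReal (Real.exp ((α - 1) * ρ)) / c := h5
      _ = ENNReal.ofReal δ := hdiv
  calc P S = ∫⁻ x in S ∩ A, f x ∂Q + ∫⁻ x in S \ A, f x ∂Q := by rw [hPS, hsplit]
    _ ≤ ENNReal.ofReal δ + t * Q S := add_le_add hb2 hb1
    _ = t * Q S + ENNReal.ofReal δ := add_comm _ _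
    _ = ENNReal.ofReal (Real.exp (ρ + Real.log (1 / δ) / (α - 1))) * M D' S +
        ENNReal.ofReal δ := by rw [ht, hε, hQ]
end

section
/- Rényi differential privacy composes additively: if M₁ is (α, ρ₁)-RDP and M₂ is (α, ρ₂)-RDP (adaptively, given M₁'s output), then the composition D ↦ (M₁(D), M₂(D, M₁(D))) is (α, ρ₁ + ρ₂)-RDP. -/
open MeasureTheory ProbabilityTheory
open scoped ENNReal Classical

section Aux

lemma ereal_le_smul {c : ℝ} (hc : 0 < c) {x : EReal} {r : ℝ}
    (h : ((c⁻¹ : ℝ) : EReal) * x ≤ (r : EReal)) : x ≤ ((c * r : ℝ) : EReal) := by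
  induction x using EReal.rec with
  | bot => exact bot_le
  | coe y =>
      rw [← EReal.coe_mul, EReal.coe_le_coe_iff] at h
      rw [EReal.coe_le_coe_iff]
      have := mul_le_mul_of_nonneg_left h hc.le
      calc y = c * (c⁻¹ * y) := by field_simp
        _ ≤ c * r := this
  | top =>
      rw [EReal.coe_mul_top_of_pos (inv_pos.mpr hc)] at h
      exact absurd (top_le_iff.mp h) (EReal.coe_ne_top r)

lemma ereal_smul_le {c : ℝ} (hc : 0 < c) {x : EReal} {r : ℝ}
    (h : x ≤ ((c * r : ℝ) : EReal)) : ((c⁻¹ : ℝ) : EReal) * x ≤ (r : EReal) := by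
  induction x using EReal.rec with
  | bot => rw [EReal.coe_mul_bot_of_pos (inv_pos.mpr hc)]; exact bot_le
  | coe y =>
      rw [EReal.coe_le_coe_iff] at h
      rw [← EReal.coe_mul, EReal.coe_le_coe_iff]
      have := mul_le_mul_of_nonneg_left h (inv_pos.mpr hc).le
      calc c⁻¹ * y ≤ c⁻¹ * (c * r) := this
        _ = r := by field_simp
  | top =>
      exact absurd (top_le_iff.mp h) (EReal.coe_ne_top _)

/-- Extraction from a Rényi divergence bound. -/
lemma renyi_extract {Ω : Type*} [MeasurableSpace Ω] {α : ℝ} (hα : 1 < α) {ρ : ℝ}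
    {P Q : Measure Ω} (h : renyiDiv α P Q ≤ (ρ : EReal)) :
    P ≪ Q ∧ ∫⁻ x, P.rnDeriv Q x ^ α ∂Q ≤ EReal.exp (((α - 1) * ρ : ℝ) : EReal) := by
  have hc : (0 : ℝ) < α - 1 := by linarith
  have hac : P ≪ Q := by
    by_contra hc'
    rw [renyiDiv, if_neg hc'] at h
    exact absurd (top_le_iff.mp h) (EReal.coe_ne_top ρ)
  refine ⟨hac, ?_⟩
  rw [renyiDiv, if_pos hac] at h
  have hlog := ereal_le_smul hc h
  rw [← ENNReal.log_le_log_iff, EReal.log_exp]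
  exact hlog

/-- Young-type pointwise inequality in `ℝ≥0∞`. -/
lemma young_aux {α : ℝ} (hα : 1 < α) (a b : ℝ≥0∞) :
    ENNReal.ofReal α * (a ^ (α - 1) * b) ≤ ENNReal.ofReal (α - 1) * a ^ α + b ^ α := by
  have hα1 : (0 : ℝ) < α - 1 := by linarith
  have hα0 : (0 : ℝ) < α := by linarith
  have hpq : (α / (α - 1)).HolderConjugate α :=
    ((Real.holderConjugate_iff_eq_conjExponent hα).mpr rfl).symm
  have h := ENNReal.young_inequality (a ^ (α - 1)) b hpq
  rw [← ENNReal.rpow_mul] at h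
  have he : (α - 1) * (α / (α - 1)) = α := by field_simp
  rw [he] at h
  have hp0 : (0:ℝ) < α / (α - 1) := by positivity
  calc ENNReal.ofReal α * (a ^ (α - 1) * b)
      ≤ ENNReal.ofReal α * (a ^ α / ENNReal.ofReal (α / (α - 1)) + b ^ α / ENNReal.ofReal α) :=
        mul_le_mul_right h _
    _ = (ENNReal.ofReal α / ENNReal.ofReal (α / (α - 1))) * a ^ α
        + (ENNReal.ofReal α / ENNReal.ofReal α) * b ^ α := by
        rw [mul_add]
        simp only [div_eq_mul_inv]
        ring
    _ = ENNReal.ofReal (α - 1) * a ^ α + b ^ α := by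
        rw [← ENNReal.ofReal_div_of_pos hp0]
        have he2 : α / (α / (α - 1)) = α - 1 := by field_simp
        have hne0 : ENNReal.ofReal α ≠ 0 := by
          simp [ENNReal.ofReal_eq_zero, not_le, hα0]
        rw [he2, ENNReal.div_self hne0 ENNReal.ofReal_ne_top, one_mul]

lemma iSup_min_rpow {α : ℝ} (hα : 1 < α) (x : ℝ≥0∞) :
    ⨆ n : ℕ, (min x n) ^ α = x ^ α := by
  have hα0 : (0 : ℝ) < α := by linarith
  apply le_antisymm
  · exact iSup_le fun n => ENNReal.rpow_le_rpow (min_le_left _ _) hα0.le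
  · rcases eq_or_ne x ⊤ with rfl | hx
    · rw [ENNReal.top_rpow_of_pos hα0]
      have hmin : ∀ n : ℕ, min (⊤ : ℝ≥0∞) (n : ℝ≥0∞) = (n : ℝ≥0∞) := fun n => min_eq_right le_top
      have h1 : ∀ n : ℕ, (n : ℝ≥0∞) ≤ (min (⊤ : ℝ≥0∞) (n : ℝ≥0∞)) ^ α := by
        intro n
        rw [hmin n]
        rcases Nat.eq_zero_or_pos n with rfl | hn
        · simp
        · calc (n : ℝ≥0∞) = (n : ℝ≥0∞) ^ (1 : ℝ) := (ENNReal.rpow_one _).symm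
            _ ≤ (n : ℝ≥0∞) ^ α := ENNReal.rpow_le_rpow_of_exponent_le
                (by exact_mod_cast Nat.one_le_cast.mpr hn) hα.le
      calc (⊤ : ℝ≥0∞) = ⨆ n : ℕ, (n : ℝ≥0∞) := (ENNReal.iSup_natCast).symm
        _ ≤ ⨆ n : ℕ, (min (⊤ : ℝ≥0∞) (n : ℝ≥0∞)) ^ α := iSup_mono h1
    · obtain ⟨n, hn⟩ := ENNReal.exists_nat_gt hx
      exact le_iSup_of_le n (by rw [min_eq_left hn.le])

lemma bind_eq_compProd {Θ₁ Θ₂ : Type*} [MeasurableSpace Θ₁] [MeasurableSpace Θ₂]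
    (P : Measure Θ₁) (K : Kernel Θ₁ Θ₂) [SFinite P] [IsSFiniteKernel K] :
    P.bind (fun θ => (K θ).map (fun y => (θ, y))) = P ⊗ₘ K := by
  have hmeas : Measurable (fun θ => (K θ).map (fun y => (θ, y)) : Θ₁ → Measure (Θ₁ × Θ₂)) := by
    have he : (fun θ => (K θ).map (fun y => (θ, y)) : Θ₁ → Measure (Θ₁ × Θ₂))
        = fun θ => (Kernel.id ×ₖ K) θ := by
      funext θ
      rw [Kernel.prod_apply, Kernel.id_apply, Measure.dirac_prod]
    rw [he]
    exact (Kernel.id ×ₖ K).measurable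
  ext s hs
  rw [Measure.bind_apply hs hmeas.aemeasurable, Measure.compProd_apply hs]
  refine lintegral_congr fun θ => ?_
  rw [Measure.map_apply measurable_prodMk_left hs]

end Aux

/-- Adaptive composition of Rényi DP: if `M₁` is `(α, ρ₁)`-RDP and `M₂` is `(α, ρ₂)`-RDP
uniformly over the auxiliary input (the output of `M₁`), then the composition
`D ↦ (M₁(D), M₂(D, M₁(D)))` is `(α, ρ₁ + ρ₂)`-RDP. -/
theorem rdp_adaptive_composition {U Θ₁ Θ₂ : Type*}
    [MeasurableSpace Θ₁] [MeasurableSpace Θ₂]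
    (Neighbor : U → U → Prop)
    (M₁ : U → Measure Θ₁) (hM₁prob : ∀ D, IsProbabilityMeasure (M₁ D))
    (M₂ : U → Kernel Θ₁ Θ₂) (hM₂markov : ∀ D, IsMarkovKernel (M₂ D))
    (α ρ₁ ρ₂ : ℝ) (hα : 1 < α)
    (hM₁ : ∀ D D', Neighbor D D' → renyiDiv α (M₁ D) (M₁ D') ≤ (ρ₁ : EReal))
    (hM₂ : ∀ θ : Θ₁, ∀ D D', Neighbor D D' →
      renyiDiv α (M₂ D θ) (M₂ D' θ) ≤ (ρ₂ : EReal)) :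
    ∀ D D', Neighbor D D' →
      renyiDiv α ((M₁ D).bind (fun θ => (M₂ D θ).map (fun y => (θ, y))))
        ((M₁ D').bind (fun θ => (M₂ D' θ).map (fun y => (θ, y)))) ≤
        ((ρ₁ + ρ₂ : ℝ) : EReal) := by
  intro D D' hN
  haveI := hM₁prob D; haveI := hM₁prob D'
  haveI := hM₂markov D; haveI := hM₂markov D'
  have hα1 : (0 : ℝ) < α - 1 := by linarith
  have hα0 : (0 : ℝ) < α := by linarith
  set P₁ := M₁ D with hP₁def
  set P₂ := M₁ D' with hP₂def
  set K₁ := M₂ D with hK₁def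
  set K₂ := M₂ D' with hK₂def
  obtain ⟨hPac, hPint⟩ := renyi_extract hα (hM₁ D D' hN)
  have hKext := fun θ => renyi_extract hα (hM₂ θ D D' hN)
  set B₁ := EReal.exp (((α - 1) * ρ₁ : ℝ) : EReal) with hB₁def
  set B₂ := EReal.exp (((α - 1) * ρ₂ : ℝ) : EReal) with hB₂def
  rw [bind_eq_compProd P₁ K₁, bind_eq_compProd P₂ K₂]
  set μ := P₁ ⊗ₘ K₁ with hμdef
  set ν := P₂ ⊗ₘ K₂ with hνdef
  have hμac : μ ≪ ν :=
    Measure.AbsolutelyContinuous.compProd hPac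
      (Filter.Eventually.of_forall fun θ => (hKext θ).1)
  set h := μ.rnDeriv ν with hhdef
  have hhm : Measurable h := Measure.measurable_rnDeriv _ _
  set p := P₁.rnDeriv P₂ with hpdef
  have hpm : Measurable p := Measure.measurable_rnDeriv _ _
  have hPd : P₂.withDensity p = P₁ := Measure.withDensity_rnDeriv_eq _ _ hPac
  have hKd : ∀ θ, (K₂ θ).withDensity ((K₁ θ).rnDeriv (K₂ θ)) = K₁ θ :=
    fun θ => Measure.withDensity_rnDeriv_eq _ _ (hKext θ).1
  have hμd : ν.withDensity h = μ := Measure.withDensity_rnDeriv_eq _ _ hμac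
  -- the key inequality, for every measurable `g`
  have key : ∀ g : Θ₁ × Θ₂ → ℝ≥0∞, Measurable g →
      ENNReal.ofReal α * ∫⁻ z, g z ^ (α - 1) ∂μ ≤
        ENNReal.ofReal (α - 1) * ∫⁻ z, g z ^ α ∂ν + B₁ * B₂ := by
    intro g hg
    have hg1 : Measurable fun z => g z ^ (α - 1) :=
      (ENNReal.continuous_rpow_const.measurable).comp hg
    have hgα : Measurable fun z => g z ^ α :=
      (ENNReal.continuous_rpow_const.measurable).comp hg
    have hA : Measurable fun θ => ∫⁻ y, g (θ, y) ^ (α - 1) ∂(K₁ θ) :=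
      Measurable.lintegral_kernel_prod_right' hg1
    have hC : Measurable fun θ => ∫⁻ y, g (θ, y) ^ α ∂(K₂ θ) :=
      Measurable.lintegral_kernel_prod_right' hgα
    have hpα : Measurable fun θ => p θ ^ α :=
      (ENNReal.continuous_rpow_const.measurable).comp hpm
    have eμ : ∫⁻ z, g z ^ (α - 1) ∂μ
        = ∫⁻ θ, p θ * ∫⁻ y, g (θ, y) ^ (α - 1) ∂(K₁ θ) ∂P₂ := by
      rw [hμdef, Measure.lintegral_compProd hg1, ← hPd,
        lintegral_withDensity_eq_lintegral_mul _ hpm hA]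
      rfl
    have eν : ∫⁻ z, g z ^ α ∂ν = ∫⁻ θ, ∫⁻ y, g (θ, y) ^ α ∂(K₂ θ) ∂P₂ := by
      rw [hνdef, Measure.lintegral_compProd hgα]
    have slice : ∀ θ, ENNReal.ofReal α * (p θ * ∫⁻ y, g (θ, y) ^ (α - 1) ∂(K₁ θ)) ≤
        ENNReal.ofReal (α - 1) * ∫⁻ y, g (θ, y) ^ α ∂(K₂ θ) + B₂ * p θ ^ α := by
      intro θ
      set k := (K₁ θ).rnDeriv (K₂ θ) with hkdef
      have hkm : Measurable k := Measure.measurable_rnDeriv _ _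
      have hkα : Measurable fun y => k y ^ α :=
        (ENNReal.continuous_rpow_const.measurable).comp hkm
      have hgθ : Measurable fun y => g (θ, y) := hg.comp measurable_prodMk_left
      have hgθ1 : Measurable fun y => g (θ, y) ^ (α - 1) :=
        (ENNReal.continuous_rpow_const.measurable).comp hgθ
      have hgθα : Measurable fun y => g (θ, y) ^ α :=
        (ENNReal.continuous_rpow_const.measurable).comp hgθ
      have e1 : ∫⁻ y, g (θ, y) ^ (α - 1) ∂(K₁ θ)
          = ∫⁻ y, k y * g (θ, y) ^ (α - 1) ∂(K₂ θ) := by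
        rw [← hKd θ, lintegral_withDensity_eq_lintegral_mul _ hkm hgθ1]
        rfl
      rw [e1, ← lintegral_const_mul (f := fun y => k y * g (θ, y) ^ (α - 1)) _ (hkm.mul hgθ1),
        ← lintegral_const_mul (f := fun y => p θ * (k y * g (θ, y) ^ (α - 1))) _
          ((hkm.mul hgθ1).const_mul _)]
      have hb : ∀ y, ENNReal.ofReal α * (p θ * (k y * g (θ, y) ^ (α - 1))) ≤
          ENNReal.ofReal (α - 1) * g (θ, y) ^ α + p θ ^ α * k y ^ α := by
        intro y
        have hy := young_aux hα (g (θ, y)) (p θ * k y)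
        rw [ENNReal.mul_rpow_of_nonneg _ _ hα0.le] at hy
        calc ENNReal.ofReal α * (p θ * (k y * g (θ, y) ^ (α - 1)))
            = ENNReal.ofReal α * (g (θ, y) ^ (α - 1) * (p θ * k y)) := by ring_nf
          _ ≤ ENNReal.ofReal (α - 1) * g (θ, y) ^ α + p θ ^ α * k y ^ α := hy
      calc ∫⁻ y, ENNReal.ofReal α * (p θ * (k y * g (θ, y) ^ (α - 1))) ∂(K₂ θ)
          ≤ ∫⁻ y, (ENNReal.ofReal (α - 1) * g (θ, y) ^ α + p θ ^ α * k y ^ α) ∂(K₂ θ) :=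
            lintegral_mono hb
        _ = ENNReal.ofReal (α - 1) * ∫⁻ y, g (θ, y) ^ α ∂(K₂ θ)
            + p θ ^ α * ∫⁻ y, k y ^ α ∂(K₂ θ) := by
            rw [lintegral_add_left (hgθα.const_mul _), lintegral_const_mul _ hgθα,
              lintegral_const_mul _ hkα]
        _ ≤ ENNReal.ofReal (α - 1) * ∫⁻ y, g (θ, y) ^ α ∂(K₂ θ) + p θ ^ α * B₂ :=
            add_le_add le_rfl (mul_le_mul_right (hKext θ).2 _)
        _ = ENNReal.ofReal (α - 1) * ∫⁻ y, g (θ, y) ^ α ∂(K₂ θ) + B₂ * p θ ^ α := by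
            rw [mul_comm (p θ ^ α) B₂]
    rw [eμ, eν]
    calc ENNReal.ofReal α * ∫⁻ θ, p θ * ∫⁻ y, g (θ, y) ^ (α - 1) ∂(K₁ θ) ∂P₂
        = ∫⁻ θ, ENNReal.ofReal α * (p θ * ∫⁻ y, g (θ, y) ^ (α - 1) ∂(K₁ θ)) ∂P₂ :=
          (lintegral_const_mul _ (hpm.mul hA)).symm
      _ ≤ ∫⁻ θ, (ENNReal.ofReal (α - 1) * ∫⁻ y, g (θ, y) ^ α ∂(K₂ θ) + B₂ * p θ ^ α) ∂P₂ :=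
          lintegral_mono slice
      _ = ENNReal.ofReal (α - 1) * ∫⁻ θ, ∫⁻ y, g (θ, y) ^ α ∂(K₂ θ) ∂P₂
          + B₂ * ∫⁻ θ, p θ ^ α ∂P₂ := by
          rw [lintegral_add_left (hC.const_mul _), lintegral_const_mul _ hC,
            lintegral_const_mul _ hpα]
      _ ≤ ENNReal.ofReal (α - 1) * ∫⁻ θ, ∫⁻ y, g (θ, y) ^ α ∂(K₂ θ) ∂P₂ + B₂ * B₁ :=
          add_le_add le_rfl (mul_le_mul_right hPint _)
      _ = ENNReal.ofReal (α - 1) * ∫⁻ θ, ∫⁻ y, g (θ, y) ^ α ∂(K₂ θ) ∂P₂ + B₁ * B₂ := by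
          rw [mul_comm B₂ B₁]
  -- truncation argument
  have hLn : ∀ n : ℕ, ∫⁻ z, (min (h z) n) ^ α ∂ν ≤ B₁ * B₂ := by
    intro n
    have hgnm : Measurable fun z => min (h z) (n : ℝ≥0∞) := hhm.min measurable_const
    have hgnα : Measurable fun z => (min (h z) n) ^ α :=
      (ENNReal.continuous_rpow_const.measurable).comp hgnm
    have hgn1 : Measurable fun z => (min (h z) n) ^ (α - 1) :=
      (ENNReal.continuous_rpow_const.measurable).comp hgnm
    set Ln := ∫⁻ z, (min (h z) n) ^ α ∂ν with hLndef
    have hfin : Ln ≠ ⊤ := by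
      have hle : Ln ≤ (n : ℝ≥0∞) ^ α := by
        calc Ln ≤ ∫⁻ _z, (n : ℝ≥0∞) ^ α ∂ν :=
            lintegral_mono fun z => ENNReal.rpow_le_rpow (min_le_right _ _) hα0.le
          _ = (n : ℝ≥0∞) ^ α := by rw [lintegral_const, measure_univ, mul_one]
      exact ne_top_of_le_ne_top
        (ENNReal.rpow_ne_top_of_nonneg hα0.le (ENNReal.natCast_ne_top n)) hle
    have hlow : Ln ≤ ∫⁻ z, (min (h z) n) ^ (α - 1) ∂μ := by
      have e2 : ∫⁻ z, (min (h z) n) ^ (α - 1) ∂μ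
          = ∫⁻ z, h z * (min (h z) n) ^ (α - 1) ∂ν := by
        rw [← hμd, lintegral_withDensity_eq_lintegral_mul _ hhm hgn1]
        rfl
      rw [e2]
      refine lintegral_mono fun z => ?_
      rcases eq_or_ne (min (h z) (n : ℝ≥0∞)) 0 with h0 | h0
      · rw [h0, ENNReal.zero_rpow_of_pos hα0]; exact zero_le'
      · have hne : min (h z) (n : ℝ≥0∞) ≠ ⊤ :=
          ne_top_of_le_ne_top (ENNReal.natCast_ne_top n) (min_le_right _ _)
        have e3 : (1 : ℝ) + (α - 1) = α := by ring
        calc (min (h z) (n : ℝ≥0∞)) ^ α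
            = (min (h z) (n : ℝ≥0∞)) ^ ((1 : ℝ) + (α - 1)) := by rw [e3]
          _ = min (h z) (n : ℝ≥0∞) * (min (h z) (n : ℝ≥0∞)) ^ (α - 1) := by
              rw [ENNReal.rpow_add _ _ h0 hne, ENNReal.rpow_one]
          _ ≤ h z * (min (h z) (n : ℝ≥0∞)) ^ (α - 1) :=
              mul_le_mul_left (min_le_left _ _) _
    have h2 : ENNReal.ofReal α * Ln ≤ ENNReal.ofReal (α - 1) * Ln + B₁ * B₂ :=
      le_trans (mul_le_mul_right hlow _) (key _ hgnm)
    have hsplit : ENNReal.ofReal α = ENNReal.ofReal (α - 1) + 1 := by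
      rw [← ENNReal.ofReal_one, ← ENNReal.ofReal_add hα1.le zero_le_one]
      norm_num
    rw [hsplit, add_mul, one_mul] at h2
    exact (ENNReal.add_le_add_iff_left (ENNReal.mul_ne_top ENNReal.ofReal_ne_top hfin)).mp h2
  have hsup : ∫⁻ z, h z ^ α ∂ν ≤ B₁ * B₂ := by
    have hmono : Monotone fun n : ℕ => fun z => (min (h z) n) ^ α := by
      intro m n hmn z
      exact ENNReal.rpow_le_rpow
        (min_le_min le_rfl (by exact_mod_cast Nat.cast_le.mpr hmn)) hα0.le
    calc ∫⁻ z, h z ^ α ∂ν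
        = ∫⁻ z, ⨆ n : ℕ, (min (h z) n) ^ α ∂ν :=
          lintegral_congr fun z => (iSup_min_rpow hα (h z)).symm
      _ = ⨆ n : ℕ, ∫⁻ z, (min (h z) n) ^ α ∂ν :=
          lintegral_iSup
            (fun n => (ENNReal.continuous_rpow_const.measurable).comp (hhm.min measurable_const))
            hmono
      _ ≤ B₁ * B₂ := iSup_le hLn
  -- conclude
  rw [renyiDiv, if_pos hμac]
  apply ereal_smul_le hα1
  have hexp : B₁ * B₂ = EReal.exp (((α - 1) * (ρ₁ + ρ₂) : ℝ) : EReal) := by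
    rw [hB₁def, hB₂def, ← EReal.exp_add, ← EReal.coe_add]
    congr 1
    exact EReal.coe_eq_coe_iff.mpr (by ring)
  have hfinal : ∫⁻ z, h z ^ α ∂ν ≤ EReal.exp (((α - 1) * (ρ₁ + ρ₂) : ℝ) : EReal) := by
    rw [← hexp]; exact hsup
  calc ENNReal.log (∫⁻ z, μ.rnDeriv ν z ^ α ∂ν)
      ≤ ENNReal.log (EReal.exp (((α - 1) * (ρ₁ + ρ₂) : ℝ) : EReal)) :=
        ENNReal.log_le_log_iff.mpr hfinal
    _ = (((α - 1) * (ρ₁ + ρ₂) : ℝ) : EReal) := EReal.log_exp _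
end

section
/- Privacy amplification by subsampling for pure DP: if M is (ε, 0)-DP, then the mechanism M ∘ PoissonSample(·, q), which first subsamples each element of the input dataset independently with probability q and then applies M, is (log(1 + q(e^ε − 1)), 0)-DP with respect to add/remove neighbouring datasets. -/
open MeasureTheory
open scoped ENNReal NNReal

/-- Poisson-subsampled mechanism: include each element of `D` independently with
probability `q`, then apply `M` to the sampled sub-dataset. Its output distribution is the
corresponding mixture over sub-datasets `S ⊆ D`. -/
noncomputable def subsampled {X Θ : Type*} [DecidableEq X] [MeasurableSpace Θ]
    (q : ℝ≥0) (M : Finset X → Measure Θ) (D : Finset X) : Measure Θ :=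
  ∑ S ∈ D.powerset, ((q : ℝ≥0∞) ^ S.card * ((1 - q : ℝ≥0) : ℝ≥0∞) ^ (D.card - S.card)) • M S

/-- Splitting the mixture over subsets of `insert x D` according to whether `x` was sampled. -/
lemma subsampled_insert_apply {X Θ : Type*} [DecidableEq X] [MeasurableSpace Θ]
    (q : ℝ≥0) (M : Finset X → Measure Θ) (D : Finset X) (x : X) (hx : x ∉ D) (T : Set Θ) :
    subsampled q M (insert x D) T =
      ∑ S ∈ D.powerset,
        ((q : ℝ≥0∞) ^ S.card * ((1 - q : ℝ≥0) : ℝ≥0∞) ^ (D.card - S.card)) *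
          (((1 - q : ℝ≥0) : ℝ≥0∞) * M S T + (q : ℝ≥0∞) * M (insert x S) T) := by
  have hdisj : Disjoint D.powerset (Finset.image (insert x) D.powerset) := by
    rw [Finset.disjoint_right]
    intro S hS hS'
    simp only [Finset.mem_image, Finset.mem_powerset] at hS hS'
    obtain ⟨A, hA, rfl⟩ := hS
    exact hx (hS' (Finset.mem_insert_self x A))
  have hinj : ∀ A ∈ D.powerset, ∀ B ∈ D.powerset, insert x A = insert x B → A = B := by
    intro A hA B hB h
    simp only [Finset.mem_powerset] at hA hB
    have hxA : x ∉ A := fun h => hx (hA h)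
    have hxB : x ∉ B := fun h => hx (hB h)
    rw [← Finset.erase_insert hxA, ← Finset.erase_insert hxB, h]
  simp only [subsampled, Measure.coe_finset_sum, Finset.sum_apply, Measure.smul_apply,
    smul_eq_mul]
  rw [Finset.powerset_insert, Finset.sum_union hdisj, Finset.sum_image hinj,
    ← Finset.sum_add_distrib]
  refine Finset.sum_congr rfl fun S hS => ?_
  simp only [Finset.mem_powerset] at hS
  have hxS : x ∉ S := fun h => hx (hS h)
  have hcard : (insert x D).card = D.card + 1 := Finset.card_insert_of_notMem hx
  have hcardS : (insert x S).card = S.card + 1 := Finset.card_insert_of_notMem hxS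
  have hle : S.card ≤ D.card := Finset.card_le_card hS
  rw [hcard, hcardS]
  rw [Nat.succ_sub hle, Nat.succ_sub_succ, pow_succ]
  ring

/-- Privacy amplification by Poisson subsampling, pure DP: if `M` is `(ε, 0)`-DP, then
`M ∘ PoissonSample(·, q)` is `(log(1 + q(e^ε − 1)), 0)`-DP with respect to add/remove
neighbouring datasets. -/
theorem subsampling_amplification_pure_dp {X Θ : Type*} [DecidableEq X] [MeasurableSpace Θ]
    (q : ℝ≥0) (hq : q ≤ 1) (M : Finset X → Measure Θ)
    (hMprob : ∀ S, IsProbabilityMeasure (M S)) (ε : ℝ) (hε : 0 ≤ ε)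
    (hM : ∀ (S : Finset X) (x : X), x ∉ S → ∀ T : Set Θ, MeasurableSet T →
      M S T ≤ ENNReal.ofReal (Real.exp ε) * M (insert x S) T ∧
      M (insert x S) T ≤ ENNReal.ofReal (Real.exp ε) * M S T) :
    ∀ (D : Finset X) (x : X), x ∉ D → ∀ T : Set Θ, MeasurableSet T →
      subsampled q M D T ≤
        ENNReal.ofReal (Real.exp (Real.log (1 + (q : ℝ) * (Real.exp ε - 1)))) *
          subsampled q M (insert x D) T ∧
      subsampled q M (insert x D) T ≤
        ENNReal.ofReal (Real.exp (Real.log (1 + (q : ℝ) * (Real.exp ε - 1)))) *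
          subsampled q M D T := by
  intro D x hx T hT
  have ha1 : (1 : ℝ) ≤ Real.exp ε := Real.one_le_exp hε
  have ha0 : (0 : ℝ) < Real.exp ε := Real.exp_pos ε
  have hqr : (0 : ℝ) ≤ (q : ℝ) := q.coe_nonneg
  have hq1 : (q : ℝ) ≤ 1 := by exact_mod_cast hq
  have hc0 : (0 : ℝ) < 1 + (q : ℝ) * (Real.exp ε - 1) := by nlinarith
  rw [Real.exp_log hc0]
  set a : ℝ := Real.exp ε with hadef
  set c : ℝ≥0∞ := ENNReal.ofReal (1 + (q : ℝ) * (a - 1)) with hcdef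
  set E : ℝ≥0∞ := ENNReal.ofReal a with hEdef
  have hE0 : E ≠ 0 := by
    simp only [hEdef, ne_eq, ENNReal.ofReal_eq_zero, not_le]; exact ha0
  have hEtop : E ≠ ⊤ := ENNReal.ofReal_ne_top
  have hq1' : ((1 - q : ℝ≥0) : ℝ) = 1 - (q : ℝ) := by
    rw [NNReal.coe_sub hq]; simp
  have h1q : ((1 - q : ℝ≥0) : ℝ≥0∞) = ENNReal.ofReal (1 - (q : ℝ)) := by
    rw [← hq1', ENNReal.ofReal_coe_nnreal]
  have hqE : (q : ℝ≥0∞) = ENNReal.ofReal (q : ℝ) := (ENNReal.ofReal_coe_nnreal (p := q)).symm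
  have hcsplit : c = ((1 - q : ℝ≥0) : ℝ≥0∞) + (q : ℝ≥0∞) * E := by
    rw [hcdef, show (1 : ℝ) + (q : ℝ) * (a - 1) = (1 - (q : ℝ)) + (q : ℝ) * a by ring,
      ENNReal.ofReal_add (by linarith) (by positivity), ENNReal.ofReal_mul hqr,
      h1q, hqE, hEdef]
  -- key real inequality
  have hab : a + a⁻¹ ≥ 2 := by
    have h := sq_nonneg (a - 1)
    have ha' : a * a⁻¹ = 1 := mul_inv_cancel₀ (ne_of_gt ha0)
    nlinarith [mul_pos ha0 (inv_pos.mpr ha0)]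
  have kreal : (1 : ℝ) ≤ (1 + (q : ℝ) * (a - 1)) * ((1 - (q : ℝ)) + (q : ℝ) * a⁻¹) := by
    have ha' : a * a⁻¹ = 1 := mul_inv_cancel₀ (ne_of_gt ha0)
    have hexp : (1 + (q : ℝ) * (a - 1)) * ((1 - (q : ℝ)) + (q : ℝ) * a⁻¹)
        = 1 + (q : ℝ) * (1 - (q : ℝ)) * (a + a⁻¹ - 2) + (q : ℝ) ^ 2 * (a * a⁻¹ - 1) := by
      ring
    rw [hexp, ha']
    have hnn : (0 : ℝ) ≤ (q : ℝ) * (1 - (q : ℝ)) * (a + a⁻¹ - 2) :=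
      mul_nonneg (mul_nonneg hqr (by linarith)) (by linarith)
    nlinarith [hnn]
  have kone : (1 : ℝ≥0∞) ≤ c * (((1 - q : ℝ≥0) : ℝ≥0∞) + (q : ℝ≥0∞) * E⁻¹) := by
    have hEinv : E⁻¹ = ENNReal.ofReal a⁻¹ := (ENNReal.ofReal_inv_of_pos ha0).symm
    rw [hcdef, hEinv, hqE, h1q, ← ENNReal.ofReal_mul hqr,
      ← ENNReal.ofReal_add (by linarith) (by positivity),
      ← ENNReal.ofReal_mul (le_of_lt hc0)]
    exact ENNReal.one_le_ofReal.mpr kreal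
  rw [subsampled_insert_apply q M D x hx T]
  simp only [subsampled, Measure.coe_finset_sum, Finset.sum_apply, Measure.smul_apply,
    smul_eq_mul]
  constructor
  · -- subsampled D ≤ c * subsampled (insert x D)
    rw [Finset.mul_sum]
    refine Finset.sum_le_sum fun S hS => ?_
    simp only [Finset.mem_powerset] at hS
    have hxS : x ∉ S := fun h => hx (hS h)
    have h1 : M S T ≤ E * M (insert x S) T := (hM S x hxS T hT).1
    have hinv : E⁻¹ * M S T ≤ M (insert x S) T := by
      calc E⁻¹ * M S T ≤ E⁻¹ * (E * M (insert x S) T) := mul_le_mul_right h1 _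
        _ = M (insert x S) T := by
            rw [← mul_assoc, ENNReal.inv_mul_cancel hE0 hEtop, one_mul]
    have key : M S T ≤ c * (((1 - q : ℝ≥0) : ℝ≥0∞) * M S T
        + (q : ℝ≥0∞) * M (insert x S) T) := by
      calc M S T = 1 * M S T := (one_mul _).symm
        _ ≤ (c * (((1 - q : ℝ≥0) : ℝ≥0∞) + (q : ℝ≥0∞) * E⁻¹)) * M S T :=
            mul_le_mul_left kone _
        _ = c * (((1 - q : ℝ≥0) : ℝ≥0∞) * M S T + (q : ℝ≥0∞) * (E⁻¹ * M S T)) := by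
            ring
        _ ≤ c * (((1 - q : ℝ≥0) : ℝ≥0∞) * M S T + (q : ℝ≥0∞) * M (insert x S) T) := by
            exact mul_le_mul_right (add_le_add_right (mul_le_mul_right hinv _) _) _
    calc (q : ℝ≥0∞) ^ S.card * ((1 - q : ℝ≥0) : ℝ≥0∞) ^ (D.card - S.card) * M S T
        ≤ (q : ℝ≥0∞) ^ S.card * ((1 - q : ℝ≥0) : ℝ≥0∞) ^ (D.card - S.card) *
          (c * (((1 - q : ℝ≥0) : ℝ≥0∞) * M S T + (q : ℝ≥0∞) * M (insert x S) T)) :=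
          mul_le_mul_right key _
      _ = c * ((q : ℝ≥0∞) ^ S.card * ((1 - q : ℝ≥0) : ℝ≥0∞) ^ (D.card - S.card) *
          (((1 - q : ℝ≥0) : ℝ≥0∞) * M S T + (q : ℝ≥0∞) * M (insert x S) T)) := by ring
  · -- subsampled (insert x D) ≤ c * subsampled D
    rw [Finset.mul_sum]
    refine Finset.sum_le_sum fun S hS => ?_
    simp only [Finset.mem_powerset] at hS
    have hxS : x ∉ S := fun h => hx (hS h)
    have h2 : M (insert x S) T ≤ E * M S T := (hM S x hxS T hT).2
    have key : ((1 - q : ℝ≥0) : ℝ≥0∞) * M S T + (q : ℝ≥0∞) * M (insert x S) T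
        ≤ c * M S T := by
      calc ((1 - q : ℝ≥0) : ℝ≥0∞) * M S T + (q : ℝ≥0∞) * M (insert x S) T
          ≤ ((1 - q : ℝ≥0) : ℝ≥0∞) * M S T + (q : ℝ≥0∞) * (E * M S T) :=
            add_le_add_right (mul_le_mul_right h2 _) _
        _ = (((1 - q : ℝ≥0) : ℝ≥0∞) + (q : ℝ≥0∞) * E) * M S T := by ring
        _ = c * M S T := by rw [hcsplit]
    calc (q : ℝ≥0∞) ^ S.card * ((1 - q : ℝ≥0) : ℝ≥0∞) ^ (D.card - S.card) *
        (((1 - q : ℝ≥0) : ℝ≥0∞) * M S T + (q : ℝ≥0∞) * M (insert x S) T)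
        ≤ (q : ℝ≥0∞) ^ S.card * ((1 - q : ℝ≥0) : ℝ≥0∞) ^ (D.card - S.card) * (c * M S T) :=
          mul_le_mul_right key _
      _ = c * ((q : ℝ≥0∞) ^ S.card * ((1 - q : ℝ≥0) : ℝ≥0∞) ^ (D.card - S.card) * M S T) := by
          ring
end

section
/- Privacy amplification by subsampling for approximate DP: if M is (ε, δ)-DP, then M composed with Poisson subsampling at rate q is (log(1 + q(e^ε − 1)), qδ)-DP with respect to add/remove neighbouring datasets. -/
open MeasureTheory
open scoped ENNReal NNReal

private lemma real_key (q a d P R : ℝ) (hq0 : 0 ≤ q) (hq1 : q ≤ 1) (ha : 1 ≤ a)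
    (hd : 0 ≤ d) (hP0 : 0 ≤ P) (hP1 : P ≤ 1) (hR : 0 ≤ R) (h : P ≤ a * R + d) :
    P ≤ (1 + q * (a - 1)) * ((1 - q) * P + q * R) + q * d := by
  rcases le_or_gt ((1 + q * (a - 1)) * (1 - q)) 1 with h1 | h1
  · nlinarith [mul_nonneg (sub_nonneg.2 h1) (by nlinarith : (0:ℝ) ≤ a * R + d - P),
      mul_nonneg (mul_nonneg (mul_nonneg hq0 (by linarith : (0:ℝ) ≤ 1 - q)) (sq_nonneg (a-1))) hR,
      mul_nonneg (mul_nonneg (mul_nonneg hq0 (by linarith : (0:ℝ) ≤ 1 - q)) (by linarith : (0:ℝ) ≤ a - 1)) hd]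
  · nlinarith [mul_nonneg (sub_nonneg.2 h1.le) hP0,
      mul_nonneg (mul_nonneg (by nlinarith : (0:ℝ) ≤ 1 + q * (a-1)) hq0) hR,
      mul_nonneg hq0 hd]

private lemma key1 (q : ℝ≥0) (hq : q ≤ 1) (a d : ℝ) (ha : 1 ≤ a) (hd : 0 ≤ d)
    (p r : ℝ≥0∞) (hp : p ≤ 1) (hr : r ≤ 1)
    (h : p ≤ ENNReal.ofReal a * r + ENNReal.ofReal d) :
    p ≤ ENNReal.ofReal (1 + (q : ℝ) * (a - 1)) *
        (((1 - q : ℝ≥0) : ℝ≥0∞) * p + (q : ℝ≥0∞) * r) + ENNReal.ofReal ((q : ℝ) * d) := by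
  have hq1 : (q : ℝ) ≤ 1 := by exact_mod_cast hq
  have hpt : p ≠ ∞ := (hp.trans_lt ENNReal.one_lt_top).ne
  have hrt : r ≠ ∞ := (hr.trans_lt ENNReal.one_lt_top).ne
  have hP1 : p.toReal ≤ 1 := by
    rw [← ENNReal.toReal_one]
    exact ENNReal.toReal_mono ENNReal.one_ne_top hp
  have hPr : p.toReal ≤ a * r.toReal + d := by
    have h2 := ENNReal.toReal_mono (by finiteness) h
    rwa [ENNReal.toReal_add (by finiteness) (by finiteness), ENNReal.toReal_mul,
      ENNReal.toReal_ofReal (by linarith), ENNReal.toReal_ofReal hd] at h2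
  have key := real_key (q : ℝ) a d p.toReal r.toReal q.coe_nonneg hq1 ha hd
    ENNReal.toReal_nonneg hP1 ENNReal.toReal_nonneg hPr
  have hs : ((1 - q : ℝ≥0) : ℝ≥0∞) = ENNReal.ofReal (1 - (q : ℝ)) := by
    rw [← ENNReal.ofReal_coe_nnreal, NNReal.coe_sub hq, NNReal.coe_one]
  have hq' : ((q : ℝ≥0) : ℝ≥0∞) = ENNReal.ofReal (q : ℝ) := ENNReal.ofReal_coe_nnreal.symm
  have hpo : p = ENNReal.ofReal p.toReal := (ENNReal.ofReal_toReal hpt).symm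
  have hro : r = ENNReal.ofReal r.toReal := (ENNReal.ofReal_toReal hrt).symm
  calc p = ENNReal.ofReal p.toReal := hpo
    _ ≤ ENNReal.ofReal ((1 + (q:ℝ) * (a - 1)) * ((1 - (q:ℝ)) * p.toReal + (q:ℝ) * r.toReal)
          + (q:ℝ) * d) := ENNReal.ofReal_le_ofReal key
    _ = ENNReal.ofReal (1 + (q : ℝ) * (a - 1)) *
        (((1 - q : ℝ≥0) : ℝ≥0∞) * p + (q : ℝ≥0∞) * r) + ENNReal.ofReal ((q : ℝ) * d) := by
        rw [hs, hq']
        have h1 : (0:ℝ) ≤ 1 - (q:ℝ) := by linarith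
        have h2 : (0:ℝ) ≤ (q:ℝ) := q.coe_nonneg
        have hC : (0:ℝ) ≤ 1 + (q:ℝ) * (a - 1) := by nlinarith
        rw [ENNReal.ofReal_add (mul_nonneg hC (by positivity)) (mul_nonneg h2 hd),
          ENNReal.ofReal_mul hC,
          ENNReal.ofReal_add (p := (1 - (q:ℝ)) * p.toReal) (q := (q:ℝ) * r.toReal)
            (mul_nonneg h1 ENNReal.toReal_nonneg) (mul_nonneg h2 ENNReal.toReal_nonneg),
          ENNReal.ofReal_mul h1, ENNReal.ofReal_mul h2, ← hpo, ← hro]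

private lemma key2 (q : ℝ≥0) (hq : q ≤ 1) (a d : ℝ) (ha : 1 ≤ a) (hd : 0 ≤ d)
    (p r : ℝ≥0∞) (h : r ≤ ENNReal.ofReal a * p + ENNReal.ofReal d) :
    ((1 - q : ℝ≥0) : ℝ≥0∞) * p + (q : ℝ≥0∞) * r ≤
      ENNReal.ofReal (1 + (q : ℝ) * (a - 1)) * p + ENNReal.ofReal ((q : ℝ) * d) := by
  have hq1 : (q:ℝ) ≤ 1 := by exact_mod_cast hq
  have hs : ((1 - q : ℝ≥0) : ℝ≥0∞) = ENNReal.ofReal (1 - (q : ℝ)) := by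
    rw [← ENNReal.ofReal_coe_nnreal, NNReal.coe_sub hq, NNReal.coe_one]
  have hq' : ((q : ℝ≥0) : ℝ≥0∞) = ENNReal.ofReal (q : ℝ) := ENNReal.ofReal_coe_nnreal.symm
  calc ((1 - q : ℝ≥0) : ℝ≥0∞) * p + (q : ℝ≥0∞) * r
      ≤ ((1 - q : ℝ≥0) : ℝ≥0∞) * p + (q : ℝ≥0∞) * (ENNReal.ofReal a * p + ENNReal.ofReal d) := by
        gcongr
    _ = (((1 - q : ℝ≥0) : ℝ≥0∞) + (q : ℝ≥0∞) * ENNReal.ofReal a) * p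
          + (q : ℝ≥0∞) * ENNReal.ofReal d := by ring
    _ = ENNReal.ofReal (1 + (q : ℝ) * (a - 1)) * p + ENNReal.ofReal ((q : ℝ) * d) := by
        rw [hs, hq', ← ENNReal.ofReal_mul q.coe_nonneg,
          ← ENNReal.ofReal_add (by linarith) (by positivity),
          ← ENNReal.ofReal_mul q.coe_nonneg]
        ring_nf

/-- Privacy amplification by Poisson subsampling, approximate DP: if `M` is `(ε, δ)`-DP,
then `M ∘ PoissonSample(·, q)` is `(log(1 + q(e^ε − 1)), qδ)`-DP with respect to
add/remove neighbouring datasets. -/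
theorem subsampling_amplification_approx_dp {X Θ : Type*} [DecidableEq X]
    [MeasurableSpace Θ]
    (q : ℝ≥0) (hq : q ≤ 1) (M : Finset X → Measure Θ)
    (hMprob : ∀ S, IsProbabilityMeasure (M S)) (ε δ : ℝ) (hε : 0 ≤ ε) (hδ : 0 ≤ δ)
    (hM : ∀ (S : Finset X) (x : X), x ∉ S → ∀ T : Set Θ, MeasurableSet T →
      M S T ≤ ENNReal.ofReal (Real.exp ε) * M (insert x S) T + ENNReal.ofReal δ ∧
      M (insert x S) T ≤ ENNReal.ofReal (Real.exp ε) * M S T + ENNReal.ofReal δ) :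
    ∀ (D : Finset X) (x : X), x ∉ D → ∀ T : Set Θ, MeasurableSet T →
      subsampled q M D T ≤
        ENNReal.ofReal (Real.exp (Real.log (1 + (q : ℝ) * (Real.exp ε - 1)))) *
          subsampled q M (insert x D) T + ENNReal.ofReal ((q : ℝ) * δ) ∧
      subsampled q M (insert x D) T ≤
        ENNReal.ofReal (Real.exp (Real.log (1 + (q : ℝ) * (Real.exp ε - 1)))) *
          subsampled q M D T + ENNReal.ofReal ((q : ℝ) * δ) := by
  intro D x hx T hT
  have ha : 1 ≤ Real.exp ε := Real.one_le_exp hε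
  set a := Real.exp ε with ha_def
  have hC : Real.exp (Real.log (1 + (q : ℝ) * (a - 1))) = 1 + (q : ℝ) * (a - 1) :=
    Real.exp_log (by nlinarith [q.coe_nonneg])
  set q' : ℝ≥0∞ := ((q : ℝ≥0) : ℝ≥0∞) with hq'_def
  set s' : ℝ≥0∞ := ((1 - q : ℝ≥0) : ℝ≥0∞) with hs'_def
  set w : Finset X → ℝ≥0∞ := fun S => q' ^ S.card * s' ^ (D.card - S.card) with hw_def
  have hqs : q' + s' = 1 := by
    rw [hq'_def, hs'_def, ← ENNReal.coe_add, add_tsub_cancel_of_le hq, ENNReal.coe_one]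
  have hw1 : ∑ S ∈ D.powerset, w S = 1 := by
    have h := Finset.prod_add (fun _ : X => q') (fun _ : X => s') D
    simp only [Finset.prod_const, hqs, one_pow] at h
    rw [h]
    refine Finset.sum_congr rfl fun t ht => ?_
    rw [hw_def, Finset.card_sdiff_of_subset (Finset.mem_powerset.1 ht)]
  have happly : ∀ E : Finset X, subsampled q M E T = ∑ S ∈ E.powerset,
      (q' ^ S.card * s' ^ (E.card - S.card)) * M S T := by
    intro E
    simp only [subsampled, Measure.coe_finset_sum, Finset.sum_apply, Measure.smul_apply, smul_eq_mul]
    rfl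
  have hPdef : subsampled q M D T = ∑ S ∈ D.powerset, w S * M S T := happly D
  have hdisj : Disjoint D.powerset (D.powerset.image (insert x)) := by
    refine Finset.disjoint_left.2 fun S hS hS' => ?_
    obtain ⟨A, hA, rfl⟩ := Finset.mem_image.1 hS'
    exact hx (Finset.mem_powerset.1 hS (Finset.mem_insert_self x A))
  have hinj : ∀ A ∈ D.powerset, ∀ B ∈ D.powerset, insert x A = insert x B → A = B := by
    intro A hA B hB hAB
    have hxA : x ∉ A := fun h => hx (Finset.mem_powerset.1 hA h)
    have hxB : x ∉ B := fun h => hx (Finset.mem_powerset.1 hB h)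
    rw [← Finset.erase_insert hxA, ← Finset.erase_insert hxB, hAB]
  have hP' : subsampled q M (insert x D) T
      = ∑ S ∈ D.powerset, (s' * (w S * M S T) + q' * (w S * M (insert x S) T)) := by
    rw [happly, Finset.powerset_insert, Finset.sum_union hdisj, Finset.sum_image hinj,
      ← Finset.sum_add_distrib]
    refine Finset.sum_congr rfl fun S hS => ?_
    have hSD := Finset.mem_powerset.1 hS
    have hxS : x ∉ S := fun h => hx (hSD h)
    have hle : S.card ≤ D.card := Finset.card_le_card hSD
    rw [Finset.card_insert_of_notMem hx, Finset.card_insert_of_notMem hxS]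
    have e1 : D.card + 1 - S.card = (D.card - S.card) + 1 := by omega
    have e2 : D.card + 1 - (S.card + 1) = D.card - S.card := by omega
    rw [e1, e2, pow_succ, pow_succ, hw_def]
    ring
  constructor
  · rw [hPdef, hP', hC]
    calc ∑ S ∈ D.powerset, w S * M S T
        ≤ ∑ S ∈ D.powerset, (ENNReal.ofReal (1 + (q : ℝ) * (a - 1)) *
            (s' * (w S * M S T) + q' * (w S * M (insert x S) T)) + w S * ENNReal.ofReal ((q:ℝ) * δ)) := by
          refine Finset.sum_le_sum fun S hS => ?_
          have hxS : x ∉ S := fun h => hx (Finset.mem_powerset.1 hS h)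
          have hk := key1 q hq a δ ha hδ (M S T) (M (insert x S) T)
            prob_le_one prob_le_one ((hM S x hxS T hT).1)
          calc w S * M S T ≤ w S * (ENNReal.ofReal (1 + (q : ℝ) * (a - 1)) *
                (s' * M S T + q' * M (insert x S) T) + ENNReal.ofReal ((q:ℝ) * δ)) :=
              mul_le_mul_right hk _
            _ = ENNReal.ofReal (1 + (q : ℝ) * (a - 1)) *
                (s' * (w S * M S T) + q' * (w S * M (insert x S) T)) +
                  w S * ENNReal.ofReal ((q:ℝ) * δ) := by ring
      _ = ENNReal.ofReal (1 + (q : ℝ) * (a - 1)) *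
            (∑ S ∈ D.powerset, (s' * (w S * M S T) + q' * (w S * M (insert x S) T))) +
            ENNReal.ofReal ((q:ℝ) * δ) := by
          rw [Finset.sum_add_distrib, ← Finset.mul_sum, ← Finset.sum_mul, hw1, one_mul]
  · rw [hPdef, hP', hC]
    calc ∑ S ∈ D.powerset, (s' * (w S * M S T) + q' * (w S * M (insert x S) T))
        ≤ ∑ S ∈ D.powerset, (ENNReal.ofReal (1 + (q : ℝ) * (a - 1)) * (w S * M S T) +
            w S * ENNReal.ofReal ((q:ℝ) * δ)) := by
          refine Finset.sum_le_sum fun S hS => ?_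
          have hxS : x ∉ S := fun h => hx (Finset.mem_powerset.1 hS h)
          have hk := key2 q hq a δ ha hδ (M S T) (M (insert x S) T) ((hM S x hxS T hT).2)
          calc s' * (w S * M S T) + q' * (w S * M (insert x S) T)
              = w S * (s' * M S T + q' * M (insert x S) T) := by ring
            _ ≤ w S * (ENNReal.ofReal (1 + (q : ℝ) * (a - 1)) * M S T +
                  ENNReal.ofReal ((q:ℝ) * δ)) := mul_le_mul_right hk _
            _ = ENNReal.ofReal (1 + (q : ℝ) * (a - 1)) * (w S * M S T) +
                  w S * ENNReal.ofReal ((q:ℝ) * δ) := by ring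
      _ = ENNReal.ofReal (1 + (q : ℝ) * (a - 1)) * (∑ S ∈ D.powerset, w S * M S T) +
            ENNReal.ofReal ((q:ℝ) * δ) := by
          rw [Finset.sum_add_distrib, ← Finset.mul_sum, ← Finset.sum_mul, hw1, one_mul]
end
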